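/- arXiv:2005.09004 — 3 statements merged into one kernel-verified Lean document; each statement's English description precedes it below -/
import Mathlib

section
/- Let p, k₂, q₂ be integers with p > 0, 0 < k₂ < p/2, gcd(k₂, p) = 1, and q₂ ≡ ±k₂² (mod p). Define for an integer n: f(n) = 1 if [n]_p ∈ {-k₂+1, ..., 0}, f(n) = -1 if [n]_p ∈ {1, ..., k₂}, and f(n) = 0 otherwise, where [n]_p is the representative of n mod p in (-p/2, p/2]. Suppose there exists an integer x with f(q₂ x) = -1, f(q₂ x + k₂) = 1, and f(q₂ x + 2k₂) = -1. Then p < 3k₂. -/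
/-!
Going up by `k₂` from a point of `I_{k₂}` can only land in `I_{-k₂}` by wrapping around
modulo `p`: if `[n]_p ∈ [1, k₂]` and `[n + k₂]_p ∈ [-k₂ + 1, 0]`, then `p` divides
`[n]_p + k₂ - [n + k₂]_p`, a positive number at most `3k₂ - 1`.
-/

/-- `redp p n` is `[n]_p`, the representative of `n` mod `p` in `(-p/2, p/2]`. -/
def redp (p n : ℤ) : ℤ := (n + (p - 1) / 2) % p - (p - 1) / 2

/-- The sign function `f` of formula (1): `1` on `I_{-k₂}`, `-1` on `I_{k₂}`,
`0` otherwise. -/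
def dAsign (p k₂ n : ℤ) : ℤ :=
  if -k₂ + 1 ≤ redp p n ∧ redp p n ≤ 0 then 1
  else if 1 ≤ redp p n ∧ redp p n ≤ k₂ then -1
  else 0

theorem redp_modEq (p n : ℤ) : redp p n ≡ n [ZMOD p] := by
  simpa [redp] using (Int.mod_modEq (n + (p - 1) / 2) p).sub_right ((p - 1) / 2)

theorem dAsign_eq_one_iff (p k₂ n : ℤ) :
    dAsign p k₂ n = 1 ↔ -k₂ + 1 ≤ redp p n ∧ redp p n ≤ 0 := by
  unfold dAsign
  grind

theorem dAsign_eq_neg_one_iff (p k₂ n : ℤ) :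
    dAsign p k₂ n = -1 ↔ 1 ≤ redp p n ∧ redp p n ≤ k₂ := by
  unfold dAsign
  grind

theorem p_lt_three_k2_general (p k₂ q₂ : ℤ)
    (x : ℤ)
    (h0 : dAsign p k₂ (q₂ * x) = -1)
    (h1 : dAsign p k₂ (q₂ * x + k₂) = 1) :
    p < 3 * k₂ := by
  obtain ⟨hr₁, hrk⟩ := (dAsign_eq_neg_one_iff p k₂ _).1 h0
  obtain ⟨hsk, hs₀⟩ := (dAsign_eq_one_iff p k₂ _).1 h1
  have hwrap : redp p (q₂ * x + k₂) ≡ redp p (q₂ * x) + k₂ [ZMOD p] :=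
    (redp_modEq p _).trans ((redp_modEq p _).add_right k₂).symm
  have hle := Int.le_of_dvd (by omega) hwrap.dvd
  omega

/-- if the step-`k₂` sequence takes values `-1, 1, -1` at
`q₂x, q₂x + k₂, q₂x + 2k₂`, then `p < 3k₂`. -/
theorem p_lt_three_k2 (p k₂ q₂ : ℤ) (hp : 0 < p) (hk : 0 < k₂)
    (hk2 : 2 * k₂ < p) (hcop : IsCoprime k₂ p)
    (hq₂ : q₂ ≡ k₂ ^ 2 [ZMOD p] ∨ q₂ ≡ -k₂ ^ 2 [ZMOD p])
    (x : ℤ)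
    (h0 : dAsign p k₂ (q₂ * x) = -1)
    (h1 : dAsign p k₂ (q₂ * x + k₂) = 1)
    (h2 : dAsign p k₂ (q₂ * x + 2 * k₂) = -1) :
    p < 3 * k₂ :=
  p_lt_three_k2_general p k₂ q₂ x h0 h1
end

section
/- Let p, k₂ be integers with p > 0, 0 < k₂, and 3k₂ > p ≥ 2k₂. Define for an integer n: f(n) = 1 if [n]_p ∈ {-k₂+1, ..., 0}, f(n) = -1 if [n]_p ∈ {1, ..., k₂}, and f(n) = 0 otherwise, where [n]_p ∈ (-p/2, p/2] is the reduction of n mod p. Then there is no integer y with f(y) = 0 and f(y + k₂) = 0. -/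
section

variable {p n : ℤ}

theorem redp_eq_emod (hp : 0 < p) (h : n % p ≤ p / 2) : redp p n = n % p := by
  have := Int.emod_nonneg n hp.ne'
  rw [redp, ← Int.emod_add_emod, Int.emod_eq_of_lt (by omega) (by omega)]
  ring

theorem redp_eq_emod_sub (hp : 0 < p) (h : p / 2 < n % p) : redp p n = n % p - p := by
  have := Int.emod_lt_of_pos n hp
  rw [redp, ← Int.emod_add_emod, Int.emod_eq_sub_self_emod,
    Int.emod_eq_of_lt (by omega) (by omega)]
  ring

theorem dAsign_eq_zero_iff {k₂ : ℤ} (hp : 0 < p) (hk : 0 < k₂) :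
    dAsign p k₂ n = 0 ↔ k₂ < n % p ∧ n % p ≤ p - k₂ := by
  have := Int.emod_nonneg n hp.ne'
  have := Int.emod_lt_of_pos n hp
  rcases le_or_gt (n % p) (p / 2) with h | h
  · rw [dAsign, redp_eq_emod hp h]
    split_ifs <;> grind
  · rw [dAsign, redp_eq_emod_sub hp h]
    split_ifs <;> grind

end

theorem no_adjacent_zeros_of_p_lt_general (p k₂ : ℤ) (hp : 0 < p) (hk : 0 < k₂)
    (h1 : p < 3 * k₂) :
    ¬ ∃ y : ℤ, dAsign p k₂ y = 0 ∧ dAsign p k₂ (y + k₂) = 0 := by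
  rintro ⟨y, hy, hyk⟩
  rw [dAsign_eq_zero_iff hp hk] at hy hyk
  have hmod : (y + k₂) % p ≡ y % p + k₂ [ZMOD p] :=
    (Int.mod_modEq _ _).trans ((Int.mod_modEq y p).add_right k₂).symm
  -- The bounds on the two residues put this multiple of `p` strictly between `0` and `p`.
  have hzero := Int.eq_zero_of_abs_lt_dvd hmod.dvd (abs_lt.mpr ⟨by omega, by omega⟩)
  omega

/-- if `2k₂ ≤ p < 3k₂`, then there is no `y` with
`f(y) = 0` and `f(y + k₂) = 0`. -/
theorem no_adjacent_zeros_of_p_lt (p k₂ : ℤ) (hp : 0 < p) (hk : 0 < k₂)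
    (h1 : p < 3 * k₂) (h2 : 2 * k₂ ≤ p) :
    ¬ ∃ y : ℤ, dAsign p k₂ y = 0 ∧ dAsign p k₂ (y + k₂) = 0 :=
  no_adjacent_zeros_of_p_lt_general p k₂ hp hk h1
end

section
/- Let p, k₂ be positive integers with 2k₂ < p, let I_{k₂} = {1,...,k₂} and I_{-k₂} = {-k₂+1,...,0}, and for an integer y let [y]_p denote the reduction of y mod p into (-p/2, p/2]. Suppose x is an integer such that [x]_p ∈ I_{-k₂}, [x + k₂]_p ∈ I_{k₂} and [x + 2k₂]_p ∈ I_{-k₂}. Then p - k₂ < 2k₂, equivalently p < 3k₂. -/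
lemma redp_dvd (p n : ℤ) : p ∣ (redp p n - n) := by
  refine ⟨-((n + (p - 1) / 2) / p), ?_⟩
  have := Int.emod_add_mul_ediv (n + (p - 1) / 2) p
  unfold redp
  linarith [this]

/-- if `[x]_p ∈ I_{-k₂}`, `[x+k₂]_p ∈ I_{k₂}`, and
`[x+2k₂]_p ∈ I_{-k₂}`, then `p - k₂ < 2k₂`, i.e. `p < 3k₂`. -/
theorem wrap_around_bound (p k₂ x : ℤ) (hp : 0 < p) (hk : 0 < k₂)
    (hlt : 2 * k₂ < p)
    (h0 : -k₂ + 1 ≤ redp p x ∧ redp p x ≤ 0)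
    (h1 : 1 ≤ redp p (x + k₂) ∧ redp p (x + k₂) ≤ k₂)
    (h2 : -k₂ + 1 ≤ redp p (x + 2 * k₂) ∧ redp p (x + 2 * k₂) ≤ 0) :
    p - k₂ < 2 * k₂ ∧ p < 3 * k₂ := by
  obtain ⟨a, ha⟩ := redp_dvd p (x + 2 * k₂)
  obtain ⟨b, hb⟩ := redp_dvd p (x + k₂)
  have hm : redp p (x + 2 * k₂) - redp p (x + k₂) - k₂ = p * (a - b) := by
    have : redp p (x + 2 * k₂) - redp p (x + k₂) - k₂ =
        (redp p (x + 2 * k₂) - (x + 2 * k₂)) - (redp p (x + k₂) - (x + k₂)) := by ring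
    rw [this, ha, hb]; ring
  have h1' := h1.1
  have h1'' := h1.2
  have h2' := h2.1
  have h2'' := h2.2
  -- p * (a - b) ∈ [-3k₂+1, -k₂-1], and -2p < -3k₂+1, so a - b = -1
  have hab : a - b = -1 := by
    rcases lt_trichotomy (a - b) (-1) with h | h | h
    · exfalso
      have : p * (a - b) ≤ p * (-2) := by
        apply mul_le_mul_of_nonneg_left (by omega) (le_of_lt hp)
      nlinarith
    · exact h
    · exfalso
      have : p * 0 ≤ p * (a - b) := by
        apply mul_le_mul_of_nonneg_left (by omega) (le_of_lt hp)
      nlinarith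
  rw [hab] at hm
  constructor <;> linarith
end
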